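/- Let W̃ = W_aff ⋊ Ω be an extended quasi-Coxeter group where W_aff is a product of irreducible affine Weyl groups acting on a product apartment and Ω permutes the simple reflections Δ_aff. Suppose that for each irreducible factor the following holds (the main theorem of Rostami's conjugacy-classes paper): for any element of the factor's extended group that is not a translation, there is a sequence of simple reflections conjugating it, keeping length constant at each step, to an element whose length can then be strictly increased by one further conjugation. Then the same conclusion holds for any w ∈ W̃ that is not a translation: there exist s₁, …, s_n, s ∈ Δ_aff with ℓ(s_n ⋯ s₁ w s₁ ⋯ s_n) = ⋯ = ℓ(s₁ w s₁) = ℓ(w) and ℓ(s s_n ⋯ s₁ w s₁ ⋯ s_n s) > ℓ(w). -/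

import Mathlib

/-! Conjugating by a simple reflection of the `i`-th factor changes only the `i`-th component
of the `W_aff`-part, because `Ω` maps `Δⁱ` into the `i`-th factor; so the length `ℓ = Σ ℓ_j`
moves exactly as `ℓ_i` does, and the factor-wise statement for a factor in which `w` is not a
translation gives the global one. -/

/-- Iterated conjugation of `w` by the (involutive) elements of the list `l`:
`conjSeq w [s₁, …, s_n] = s_n ⋯ s₁ w s₁ ⋯ s_n`. -/
def conjSeq {G : Type*} [Group G] (w : G) (l : List G) : G :=
  l.foldl (fun x u => u * x * u) w

open SemidirectProduct

theorem conjSeq_cons {G : Type*} [Group G] (w u : G) (l : List G) :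
    conjSeq w (u :: l) = conjSeq (u * w * u) l :=
  rfl

theorem SemidirectProduct.left_inl_mul_mul_inl {N G : Type*} [Group N] [Group G]
    {φ : G →* MulAut N} (n : N) (v : N ⋊[φ] G) :
    (inl n * v * inl n).left = n * v.left * φ v.right n := by
  simp [mul_left, mul_right]

section PiFactor

variable {ι : Type*} [DecidableEq ι] {A : ι → Type*} [∀ i, Group (A i)] {G : Type*} [Group G]
  {φ : G →* MulAut (∀ i, A i)} {i j : ι}

theorem left_inl_mulSingle_conj_of_ne (hji : j ≠ i) {t : A i} {v : (∀ i, A i) ⋊[φ] G}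
    (hv : ∃ t', φ v.right (Pi.mulSingle i t) = Pi.mulSingle i t') :
    (inl (Pi.mulSingle i t) * v * inl (Pi.mulSingle i t)).left j = v.left j := by
  obtain ⟨t', ht'⟩ := hv
  rw [left_inl_mul_mul_inl, ht']
  simp [Pi.mulSingle_eq_of_ne hji]

theorem left_conjSeq_of_ne {S : Set (A i)}
    (hS : ∀ (g : G), ∀ t ∈ S, ∃ t', φ g (Pi.mulSingle i t) = Pi.mulSingle i t')
    (hji : j ≠ i) {l : List ((∀ i, A i) ⋊[φ] G)}
    (hl : ∀ u ∈ l, ∃ t ∈ S, u = inl (Pi.mulSingle i t)) (w : (∀ i, A i) ⋊[φ] G) :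
    (conjSeq w l).left j = w.left j := by
  induction l generalizing w with
  | nil => rfl
  | cons u l ih =>
    obtain ⟨t, ht, rfl⟩ := hl u List.mem_cons_self
    rw [conjSeq_cons, ih (fun u hu => hl u (List.mem_cons_of_mem _ hu)),
      left_inl_mulSingle_conj_of_ne hji (hS _ t ht)]

end PiFactor

theorem stmt16_general {ι : Type*} [Fintype ι] [DecidableEq ι]
    {A : ι → Type*} [∀ i, Group (A i)] {Ω : Type*} [Group Ω]
    (φ : Ω →* MulAut (∀ i, A i))
    (Δ : ∀ i, Set (A i)) (ℓi : ∀ i, A i → ℕ)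
    (TrI : ι → Set ((∀ i, A i) ⋊[φ] Ω)) (Tr : Set ((∀ i, A i) ⋊[φ] Ω))
    (hTr : ∀ w, w ∈ Tr ↔ ∀ i, w ∈ TrI i)
    (hΩΔ : ∀ (ω : Ω) (i : ι), ∀ s ∈ Δ i,
      ∃ s' ∈ Δ i, φ ω (Pi.mulSingle i s) = Pi.mulSingle i s')
    (hfactor : ∀ (i : ι) (w : (∀ i, A i) ⋊[φ] Ω), w ∉ TrI i →
      ∃ (l : List ((∀ i, A i) ⋊[φ] Ω)) (s : (∀ i, A i) ⋊[φ] Ω),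
        (∀ u ∈ l, ∃ t ∈ Δ i, u = SemidirectProduct.inl (Pi.mulSingle i t)) ∧
        (∃ t ∈ Δ i, s = SemidirectProduct.inl (Pi.mulSingle i t)) ∧
        (∀ p, p <+: l → ℓi i ((conjSeq w p).left i) = ℓi i (w.left i)) ∧
        ℓi i ((s * conjSeq w l * s).left i) > ℓi i (w.left i)) :
    ∀ w : (∀ i, A i) ⋊[φ] Ω, w ∉ Tr →
      ∃ (l : List ((∀ i, A i) ⋊[φ] Ω)) (s : (∀ i, A i) ⋊[φ] Ω),
        (∀ u ∈ l, ∃ i, ∃ t ∈ Δ i, u = SemidirectProduct.inl (Pi.mulSingle i t)) ∧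
        (∃ i, ∃ t ∈ Δ i, s = SemidirectProduct.inl (Pi.mulSingle i t)) ∧
        (∀ p, p <+: l → (∑ i, ℓi i ((conjSeq w p).left i)) = ∑ i, ℓi i (w.left i)) ∧
        (∑ i, ℓi i ((s * conjSeq w l * s).left i)) > ∑ i, ℓi i (w.left i) := by
  intro w hw
  obtain ⟨i, hi⟩ : ∃ i, w ∉ TrI i := by simpa [hTr] using hw
  obtain ⟨l, s, hl, hs, hpref, hinc⟩ := hfactor i w hi
  have hΔ : ∀ (ω : Ω), ∀ t ∈ Δ i, ∃ t', φ ω (Pi.mulSingle i t) = Pi.mulSingle i t' :=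
    fun ω t ht => (hΩΔ ω i t ht).imp fun _ => And.right
  have hs' : ∀ j ≠ i, (s * conjSeq w l * s).left j = w.left j := by
    intro j hji
    obtain ⟨t, ht, rfl⟩ := hs
    rw [left_inl_mulSingle_conj_of_ne hji (hΔ _ t ht), left_conjSeq_of_ne hΔ hji hl]
  refine ⟨l, s, fun u hu => ⟨i, hl u hu⟩, ⟨i, hs⟩, fun p hp => ?_, ?_⟩
  · refine Finset.sum_congr rfl fun j _ => ?_
    rcases eq_or_ne j i with rfl | hji
    · exact hpref p hp
    · rw [left_conjSeq_of_ne hΔ hji (fun u hu => hl u (hp.mem hu))]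
  · refine Finset.sum_lt_sum (fun j _ => ?_) ⟨i, Finset.mem_univ i, hinc⟩
    rcases eq_or_ne j i with rfl | hji
    · exact hinc.le
    · rw [hs' j hji]

/-- Let `W̃ = W_aff ⋊ Ω` be an extended quasi-Coxeter group, where
`W_aff = Π i, W_aff(Σ_i)` is a product of irreducible affine Weyl groups with simple
reflections `Δⁱ` and lengths `ℓ_i` (with `ℓ = Σ_i ℓ_i`), `Ω` permutes each embedded
`Δⁱ`, and the translation subset is `Tr = {w : ∀ i, w acts by translations on 𝒜_i}`.
Suppose the main theorem of [roro] holds for each irreducible factor: any `w` that is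
not a translation in the `i`-th factor can be conjugated by simple reflections of `Δⁱ`,
keeping the `i`-th length constant at each step, to an element whose `i`-th length is
then strictly increased by one further conjugation.  Then for every `w ∈ W̃` that is
not a translation, there are `s₁, …, s_n, s ∈ Δ_aff` with
`ℓ(s_n ⋯ s₁ w s₁ ⋯ s_n) = ⋯ = ℓ(s₁ w s₁) = ℓ(w)` and
`ℓ(s s_n ⋯ s₁ w s₁ ⋯ s_n s) > ℓ(w)`. -/
theorem stmt16 {ι : Type*} [Fintype ι] [DecidableEq ι]
    {A : ι → Type*} [∀ i, Group (A i)] {Ω : Type*} [Group Ω]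
    (φ : Ω →* MulAut (∀ i, A i))
    (Δ : ∀ i, Set (A i)) (ℓi : ∀ i, A i → ℕ)
    (TrI : ι → Set ((∀ i, A i) ⋊[φ] Ω)) (Tr : Set ((∀ i, A i) ⋊[φ] Ω))
    (hTr : ∀ w, w ∈ Tr ↔ ∀ i, w ∈ TrI i)
    (hinvΔ : ∀ i, ∀ s ∈ Δ i, s * s = 1)
    (hΩΔ : ∀ (ω : Ω) (i : ι), ∀ s ∈ Δ i,
      ∃ s' ∈ Δ i, φ ω (Pi.mulSingle i s) = Pi.mulSingle i s')
    (hfactor : ∀ (i : ι) (w : (∀ i, A i) ⋊[φ] Ω), w ∉ TrI i →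
      ∃ (l : List ((∀ i, A i) ⋊[φ] Ω)) (s : (∀ i, A i) ⋊[φ] Ω),
        (∀ u ∈ l, ∃ t ∈ Δ i, u = SemidirectProduct.inl (Pi.mulSingle i t)) ∧
        (∃ t ∈ Δ i, s = SemidirectProduct.inl (Pi.mulSingle i t)) ∧
        (∀ p, p <+: l → ℓi i ((conjSeq w p).left i) = ℓi i (w.left i)) ∧
        ℓi i ((s * conjSeq w l * s).left i) > ℓi i (w.left i)) :
    ∀ w : (∀ i, A i) ⋊[φ] Ω, w ∉ Tr →
      ∃ (l : List ((∀ i, A i) ⋊[φ] Ω)) (s : (∀ i, A i) ⋊[φ] Ω),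
        (∀ u ∈ l, ∃ i, ∃ t ∈ Δ i, u = SemidirectProduct.inl (Pi.mulSingle i t)) ∧
        (∃ i, ∃ t ∈ Δ i, s = SemidirectProduct.inl (Pi.mulSingle i t)) ∧
        (∀ p, p <+: l → (∑ i, ℓi i ((conjSeq w p).left i)) = ∑ i, ℓi i (w.left i)) ∧
        (∑ i, ℓi i ((s * conjSeq w l * s).left i)) > ∑ i, ℓi i (w.left i) :=
  stmt16_general φ Δ ℓi TrI Tr hTr hΩΔ hfactor
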